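/- Let X follow the elliptical distribution E(μ,Σ,g) and set ξ₁ := (X-μ)ᵀΣ^{-1}(X-μ). Then the random variable ψ_a(ξ₁) has a Lebesgue density on (0,∞) given by t ↦ s_d·ρ_a(t); that is, the pushforward of the law of X under x ↦ ψ_a((x-μ)ᵀΣ^{-1}(x-μ)) is the measure with density s_d·ρ_a restricted to (0,∞). -/

import Mathlib

/-!
Write `Σ⁻¹ = BᵀB`. The substitution `y = B (x - μ)` turns the quadratic form into `y ⬝ᵥ y` at the
cost of a factor `√det Σ`, which cancels the normalisation `|Σ|^{-1/2}` of the density. Polar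
coordinates followed by `t = r²` show that `ξ₁` has density `s_d t^{(d-2)/2} g(t) = s_d g̃(t)` on
`(0,∞)`. Finally `ψ_a` is a diffeomorphism of `(0,∞)` with inverse `Ψ_a`, and the one-dimensional
change of variables `t = ψ_a(ξ)` turns the density `s_d g̃` into `s_d (g̃ / ψ_a') ∘ Ψ_a = s_d ρ_a`.
-/

open Real Filter MeasureTheory Matrix

/-- The transformation `ψ_a(ξ) = -a + (a^{d/2} + ξ^{d/2})^{2/d}`. -/
noncomputable def psi (d : ℕ) (a : ℝ) (ξ : ℝ) : ℝ :=
  -a + (a ^ ((d : ℝ) / 2) + ξ ^ ((d : ℝ) / 2)) ^ (2 / (d : ℝ))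

/-- The inverse transformation `Ψ_a(t) = ((t+a)^{d/2} - a^{d/2})^{2/d}`. -/
noncomputable def Psi (d : ℕ) (a : ℝ) (t : ℝ) : ℝ :=
  ((t + a) ^ ((d : ℝ) / 2) - a ^ ((d : ℝ) / 2)) ^ (2 / (d : ℝ))

/-- The normalized generator `g̃(ξ) = ξ^{(d-2)/2}·g(ξ)`. -/
noncomputable def gtilde (d : ℕ) (g : ℝ → ℝ) (ξ : ℝ) : ℝ :=
  ξ ^ (((d : ℝ) - 2) / 2) * g ξ

/-- The function `z_a(ξ) = g̃(ξ)/ψ_a'(ξ)`. -/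
noncomputable def za (d : ℕ) (a : ℝ) (g : ℝ → ℝ) (ξ : ℝ) : ℝ :=
  gtilde d g ξ / deriv (psi d a) ξ

/-- The function `ρ_a = z_a ∘ Ψ_a`. -/
noncomputable def rho (d : ℕ) (a : ℝ) (g : ℝ → ℝ) (t : ℝ) : ℝ :=
  za d a g (Psi d a t)

/-- The quadratic form `(x-μ)ᵀ Σ⁻¹ (x-μ)`. -/
noncomputable def quadForm {d : ℕ} (μv : Fin d → ℝ) (S : Matrix (Fin d) (Fin d) ℝ)
    (x : Fin d → ℝ) : ℝ :=
  (x - μv) ⬝ᵥ (S⁻¹ *ᵥ (x - μv))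

/-- The elliptical density `f(x) = |Σ|^{-1/2} g((x-μ)ᵀ Σ⁻¹ (x-μ))`. -/
noncomputable def ellDensity {d : ℕ} (g : ℝ → ℝ) (μv : Fin d → ℝ)
    (S : Matrix (Fin d) (Fin d) ℝ) (x : Fin d → ℝ) : ℝ :=
  |S.det| ^ (-(1 : ℝ) / 2) * g (quadForm μv S x)

open scoped ENNReal

lemma pi_rpow_div_Gamma_nonneg {x : ℝ} (hx : 0 ≤ x) : 0 ≤ π ^ (x / 2) / Gamma (x / 2) :=
  div_nonneg (by positivity) (Gamma_nonneg_of_nonneg (by positivity))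

lemma map_restrict_withDensity_abs_deriv_mul {s : Set ℝ} {f f' : ℝ → ℝ} (hs : MeasurableSet s)
    (hfm : Measurable f) (hf' : ∀ x ∈ s, HasDerivWithinAt f (f' x) s x) (hf : Set.InjOn f s)
    (h : ℝ → ℝ≥0∞) :
    Measure.map f ((volume.restrict s).withDensity fun x => ENNReal.ofReal |f' x| * h (f x)) =
      (volume.restrict (f '' s)).withDensity h := by
  ext t ht
  rw [Measure.map_apply hfm ht, withDensity_apply _ (hfm ht), withDensity_apply _ ht,
    Measure.restrict_restrict (hfm ht), Measure.restrict_restrict ht, ← Set.image_preimage_inter,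
    lintegral_image_eq_lintegral_abs_deriv_mul ((hfm ht).inter hs)
      (fun x hx => (hf' x hx.2).mono Set.inter_subset_right) (hf.mono Set.inter_subset_right)]

lemma lintegral_comp_rpow_Ioi (g : ℝ → ℝ≥0∞) {p : ℝ} (hp : p ≠ 0) :
    ∫⁻ x in Set.Ioi 0, ENNReal.ofReal (|p| * x ^ (p - 1)) * g (x ^ p) =
      ∫⁻ y in Set.Ioi 0, g y := by
  have himage : (· ^ p) '' Set.Ioi 0 = Set.Ioi (0 : ℝ) := by
    ext y
    refine ⟨fun ⟨x, hx, hxy⟩ => hxy ▸ rpow_pos_of_pos hx p, fun hy => ⟨y ^ p⁻¹, ?_, ?_⟩⟩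
    · exact rpow_pos_of_pos hy _
    · exact rpow_inv_rpow (le_of_lt hy) hp
  conv_rhs => rw [← himage]
  rw [lintegral_image_eq_lintegral_abs_deriv_mul measurableSet_Ioi
    (fun x hx => (hasDerivAt_rpow_const (Or.inl (ne_of_gt hx))).hasDerivWithinAt)
    ((rpow_left_injOn hp).mono (Set.Ioi_subset_Ici_self (a := 0)))]
  refine setLIntegral_congr_fun measurableSet_Ioi fun x hx => ?_
  rw [abs_mul, abs_of_nonneg (rpow_nonneg (le_of_lt hx) _)]

lemma lintegral_fun_norm_addHaar {E : Type*} [NormedAddCommGroup E] [InnerProductSpace ℝ E]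
    [FiniteDimensional ℝ E] [MeasurableSpace E] [BorelSpace E] [Nontrivial E]
    (μ : Measure E) [μ.IsAddHaarMeasure] {f : ℝ → ℝ≥0∞} (hf : Measurable f) :
    ∫⁻ x, f ‖x‖ ∂μ = μ.toSphere Set.univ *
      ∫⁻ r in Set.Ioi 0, ENNReal.ofReal (r ^ (Module.finrank ℝ E - 1)) * f r :=
  calc ∫⁻ x, f ‖x‖ ∂μ = ∫⁻ x : ({0}ᶜ : Set E), f ‖x.1‖ ∂(μ.comap (↑)) := by
        rw [lintegral_subtype_comap (measurableSet_singleton _).compl (fun x => f ‖x‖),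
          restrict_compl_singleton]
    _ = ∫⁻ x, f x.2 ∂(μ.toSphere.prod (.volumeIoiPow (Module.finrank ℝ E - 1))) := by
        simpa using (μ.measurePreserving_homeomorphUnitSphereProd.lintegral_comp_emb
          (Homeomorph.measurableEmbedding _) (f ∘ Subtype.val ∘ Prod.snd))
    _ = μ.toSphere Set.univ * ∫⁻ r, f r ∂(.volumeIoiPow (Module.finrank ℝ E - 1)) := by
        rw [lintegral_prod (fun z : _ × Set.Ioi (0 : ℝ) => f z.2)
            (hf.comp (measurable_subtype_coe.comp measurable_snd)).aemeasurable]
        dsimp only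
        rw [lintegral_const, mul_comm]
    _ = _ := by
        rw [Measure.volumeIoiPow, lintegral_withDensity_eq_lintegral_mul _
          (measurable_subtype_coe.pow_const _).ennreal_ofReal
          (show Measurable fun r : Set.Ioi (0 : ℝ) => f r from hf.comp measurable_subtype_coe),
          ← lintegral_subtype_comap measurableSet_Ioi]
        rfl

lemma toSphere_univ_euclideanSpace {d : ℕ} (hd : 0 < d) :
    (volume : Measure (EuclideanSpace ℝ (Fin d))).toSphere Set.univ =
      ENNReal.ofReal (2 * (π ^ ((d : ℝ) / 2) / Gamma ((d : ℝ) / 2))) := by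
  have : Nonempty (Fin d) := ⟨⟨0, hd⟩⟩
  have hd' : (0 : ℝ) < d := Nat.cast_pos.mpr hd
  rw [Measure.toSphere_apply_univ, EuclideanSpace.volume_ball, finrank_euclideanSpace_fin,
    Fintype.card_fin, ENNReal.ofReal_one, one_pow, one_mul, ← ENNReal.ofReal_natCast,
    ← ENNReal.ofReal_mul (Nat.cast_nonneg _), Gamma_add_one (by positivity),
    sqrt_eq_rpow, ← rpow_natCast, ← rpow_mul pi_pos.le, one_div_mul_eq_div]
  have := (Gamma_pos_of_pos (by positivity : (0 : ℝ) < d / 2)).ne'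
  congr 1
  field_simp

lemma lintegral_dotProduct_self_eq_lintegral_norm_sq {ι : Type*} [Fintype ι] (F : ℝ → ℝ≥0∞) :
    ∫⁻ y : ι → ℝ, F (y ⬝ᵥ y) = ∫⁻ z : EuclideanSpace ℝ ι, F (‖z‖ ^ 2) := by
  rw [← (PiLp.volume_preserving_toLp ι).lintegral_comp_emb
    (MeasurableEquiv.toLp 2 (ι → ℝ)).measurableEmbedding]
  simp only [EuclideanSpace.real_norm_sq_eq]
  simp [dotProduct, sq]

lemma lintegral_comp_dotProduct_self {d : ℕ} (hd : 0 < d) {F : ℝ → ℝ≥0∞} (hF : Measurable F) :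
    ∫⁻ y : Fin d → ℝ, F (y ⬝ᵥ y) = ENNReal.ofReal (π ^ ((d : ℝ) / 2) / Gamma ((d : ℝ) / 2)) *
      ∫⁻ t in Set.Ioi 0, ENNReal.ofReal (t ^ (((d : ℝ) - 2) / 2)) * F t := by
  have : Nontrivial (EuclideanSpace ℝ (Fin d)) :=
    Module.nontrivial_of_finrank_pos (by rwa [finrank_euclideanSpace_fin])
  rw [lintegral_dotProduct_self_eq_lintegral_norm_sq,
    lintegral_fun_norm_addHaar volume (f := fun r => F (r ^ 2))
      (hF.comp (measurable_id.pow_const 2)),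
    toSphere_univ_euclideanSpace hd, finrank_euclideanSpace_fin, ENNReal.ofReal_mul zero_le_two,
    mul_comm (ENNReal.ofReal 2), mul_assoc]
  conv_rhs => rw [← lintegral_comp_rpow_Ioi _ two_ne_zero]
  rw [← lintegral_const_mul' _ _ ENNReal.ofReal_ne_top]
  congr 1
  refine setLIntegral_congr_fun measurableSet_Ioi fun r (hr : 0 < r) => ?_
  rw [rpow_two, ← mul_assoc, ← ENNReal.ofReal_mul zero_le_two, ← mul_assoc,
    ← ENNReal.ofReal_mul (by positivity)]
  congr 2
  have hsq : (r ^ 2) ^ (((d : ℝ) - 2) / 2) = r ^ ((d : ℝ) - 2) := by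
    rw [← rpow_natCast, ← rpow_mul hr.le]
    ring_nf
  rw [hsq, ← rpow_natCast, Nat.cast_sub hd, abs_two, Nat.cast_one,
    show (d : ℝ) - 1 = 1 + ((d : ℝ) - 2) by ring, rpow_add hr]
  norm_num
  ring

lemma lintegral_comp_mulVec_sub {ι : Type*} [Fintype ι] [DecidableEq ι] {B : Matrix ι ι ℝ}
    (hB : B.det ≠ 0) (μv : ι → ℝ) {F : (ι → ℝ) → ℝ≥0∞} (hF : Measurable F) :
    ∫⁻ x, F (B *ᵥ (x - μv)) = ENNReal.ofReal |B.det|⁻¹ * ∫⁻ y, F y := by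
  have hdet : LinearMap.det (toLin' B) ≠ 0 := by rwa [LinearMap.det_toLin']
  rw [lintegral_sub_right_eq_self (fun x => F (B *ᵥ x)) μv]
  change ∫⁻ x, F (toLin' B x) = _
  rw [← lintegral_map hF (toLin' B).continuous_of_finiteDimensional.measurable,
    Measure.map_linearMap_addHaar_eq_smul_addHaar _ hdet, lintegral_smul_measure,
    LinearMap.det_toLin', abs_inv, smul_eq_mul]

lemma continuous_quadForm {d : ℕ} (μv : Fin d → ℝ) (S : Matrix (Fin d) (Fin d) ℝ) :
    Continuous (quadForm μv S) :=
  have hsub : Continuous fun x : Fin d → ℝ => x - μv := continuous_id.sub continuous_const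
  hsub.dotProduct (continuous_const.matrix_mulVec hsub)

open scoped MatrixOrder in
lemma exists_quadForm_eq_dotProduct_self {d : ℕ} (μv : Fin d → ℝ)
    {S : Matrix (Fin d) (Fin d) ℝ} (hS : S.PosDef) :
    ∃ B : Matrix (Fin d) (Fin d) ℝ, S.det * B.det ^ 2 = 1 ∧
      ∀ x, quadForm μv S x = (B *ᵥ (x - μv)) ⬝ᵥ (B *ᵥ (x - μv)) := by
  obtain ⟨B, hB⟩ := CStarAlgebra.nonneg_iff_eq_star_mul_self.mp hS.inv.posSemidef.nonneg
  rw [star_eq_conjTranspose, conjTranspose_eq_transpose_of_trivial] at hB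
  refine ⟨B, ?_, fun x => ?_⟩
  · rw [← (show S⁻¹.det = B.det ^ 2 by rw [hB, det_mul, det_transpose, sq]), ← det_mul,
      mul_nonsing_inv _ hS.det_pos.ne'.isUnit, det_one]
  · rw [quadForm, hB, ← mulVec_mulVec, dotProduct_mulVec, vecMul_transpose]

lemma lintegral_comp_quadForm {d : ℕ} (μv : Fin d → ℝ) {S : Matrix (Fin d) (Fin d) ℝ}
    (hS : S.PosDef) {F : ℝ → ℝ≥0∞} (hF : Measurable F) :
    ∫⁻ x, F (quadForm μv S x) = ENNReal.ofReal √S.det * ∫⁻ y : Fin d → ℝ, F (y ⬝ᵥ y) := by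
  obtain ⟨B, hdet, hB⟩ := exists_quadForm_eq_dotProduct_self μv hS
  have hB0 : B.det ≠ 0 := by rintro h; simp [h] at hdet
  have hsqrt : √S.det = |B.det|⁻¹ := by
    rw [← sqrt_sq_eq_abs, ← sqrt_inv, eq_inv_of_mul_eq_one_left hdet]
  simp_rw [hB]
  rw [lintegral_comp_mulVec_sub hB0 μv (F := fun y => F (y ⬝ᵥ y))
    (hF.comp (continuous_id.dotProduct continuous_id).measurable), hsqrt]

lemma map_quadForm_withDensity {d : ℕ} (hd : 0 < d) (μv : Fin d → ℝ)
    {S : Matrix (Fin d) (Fin d) ℝ} (hS : S.PosDef) {F : ℝ → ℝ≥0∞} (hF : Measurable F) :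
    Measure.map (quadForm μv S) (volume.withDensity fun x => F (quadForm μv S x)) =
      (volume.restrict (Set.Ioi 0)).withDensity fun t => ENNReal.ofReal
        (√S.det * (π ^ ((d : ℝ) / 2) / Gamma ((d : ℝ) / 2)) * t ^ (((d : ℝ) - 2) / 2)) * F t := by
  have hQ := (continuous_quadForm μv S).measurable
  ext s hs
  have hFs : Measurable (s.indicator F) := hF.indicator hs
  rw [Measure.map_apply hQ hs, withDensity_apply _ (hQ hs), withDensity_apply _ hs,
    ← lintegral_indicator (hQ hs), ← lintegral_indicator hs]
  have hind (x : Fin d → ℝ) : (quadForm μv S ⁻¹' s).indicator (fun x => F (quadForm μv S x)) x =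
      s.indicator F (quadForm μv S x) := Set.indicator_comp_right _
  simp_rw [hind, Set.indicator_mul_right]
  rw [lintegral_comp_quadForm μv hS hFs, lintegral_comp_dotProduct_self hd hFs, ← mul_assoc,
    ← ENNReal.ofReal_mul (sqrt_nonneg _), ← lintegral_const_mul' _ _ ENNReal.ofReal_ne_top]
  refine setLIntegral_congr_fun measurableSet_Ioi fun t (ht : 0 < t) => ?_
  have := pi_rpow_div_Gamma_nonneg d.cast_nonneg
  rw [← mul_assoc, ← ENNReal.ofReal_mul (by positivity)]

section Psi

lemma two_div_eq_inv_half (x : ℝ) : 2 / x = (x / 2)⁻¹ := (inv_div x 2).symm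

variable {d : ℕ} {a : ℝ}

lemma continuous_psi : Continuous (psi d a) :=
  continuous_const.add <| (continuous_const.add (continuous_rpow_const (by positivity))).rpow_const
    fun _ => Or.inr (by positivity)

lemma psi_pos (hd : 0 < d) (ha : 0 ≤ a) {ξ : ℝ} (hξ : 0 < ξ) : 0 < psi d a ξ := by
  have hd' : (0 : ℝ) < d := Nat.cast_pos.mpr hd
  have key : a < (a ^ ((d : ℝ) / 2) + ξ ^ ((d : ℝ) / 2)) ^ (2 / (d : ℝ)) := by
    calc a = (a ^ ((d : ℝ) / 2)) ^ ((d : ℝ) / 2)⁻¹ := (rpow_rpow_inv ha (by positivity)).symm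
      _ < _ := by
        rw [inv_div]
        gcongr
        exact lt_add_of_pos_right _ (rpow_pos_of_pos hξ _)
  unfold psi
  linarith

lemma Psi_pos (hd : 0 < d) (ha : 0 ≤ a) {t : ℝ} (ht : 0 < t) : 0 < Psi d a t := by
  have hd' : (0 : ℝ) < d := Nat.cast_pos.mpr hd
  have : a ^ ((d : ℝ) / 2) < (t + a) ^ ((d : ℝ) / 2) := by gcongr; linarith
  exact rpow_pos_of_pos (by linarith) _

lemma Psi_psi (hd : 0 < d) (ha : 0 ≤ a) {ξ : ℝ} (hξ : 0 ≤ ξ) : Psi d a (psi d a ξ) = ξ := by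
  have hd' : (d : ℝ) / 2 ≠ 0 := by positivity
  unfold Psi psi
  rw [neg_add_cancel_comm, two_div_eq_inv_half, rpow_inv_rpow (by positivity) hd',
    add_sub_cancel_left, rpow_rpow_inv hξ hd']

lemma psi_Psi (hd : 0 < d) (ha : 0 ≤ a) {t : ℝ} (ht : 0 ≤ t) : psi d a (Psi d a t) = t := by
  have hd' : (d : ℝ) / 2 ≠ 0 := by positivity
  have : a ^ ((d : ℝ) / 2) ≤ (t + a) ^ ((d : ℝ) / 2) := by gcongr; linarith
  unfold Psi psi
  rw [two_div_eq_inv_half, rpow_inv_rpow (by linarith) hd', add_sub_cancel,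
    rpow_rpow_inv (by linarith) hd', neg_add_cancel_comm_assoc]

lemma bijOn_psi (hd : 0 < d) (ha : 0 ≤ a) : Set.BijOn (psi d a) (Set.Ioi 0) (Set.Ioi 0) :=
  Set.InvOn.bijOn (f' := Psi d a)
    ⟨fun _ hξ => Psi_psi hd ha (le_of_lt hξ), fun _ ht => psi_Psi hd ha (le_of_lt ht)⟩
    (fun _ => psi_pos hd ha) (fun _ => Psi_pos hd ha)

lemma hasDerivAt_psi (hd : 0 < d) (ha : 0 ≤ a) {ξ : ℝ} (hξ : 0 < ξ) :
    HasDerivAt (psi d a)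
      (ξ ^ ((d : ℝ) / 2 - 1) * (a ^ ((d : ℝ) / 2) + ξ ^ ((d : ℝ) / 2)) ^ (2 / (d : ℝ) - 1)) ξ := by
  have hd' : (d : ℝ) ≠ 0 := by positivity
  have hsum : a ^ ((d : ℝ) / 2) + ξ ^ ((d : ℝ) / 2) ≠ 0 := by positivity
  refine ((((hasDerivAt_rpow_const (Or.inl hξ.ne')).const_add _).rpow_const
    (Or.inl hsum)).const_add (-a)).congr_deriv ?_
  field_simp

lemma deriv_psi_pos (hd : 0 < d) (ha : 0 ≤ a) {ξ : ℝ} (hξ : 0 < ξ) : 0 < deriv (psi d a) ξ := by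
  rw [(hasDerivAt_psi hd ha hξ).deriv]
  positivity

end Psi

lemma map_psi_withDensity_gtilde {d : ℕ} (hd : 0 < d) {a : ℝ} (ha : 0 ≤ a) (g : ℝ → ℝ) (c : ℝ) :
    Measure.map (psi d a)
        ((volume.restrict (Set.Ioi 0)).withDensity fun ξ => ENNReal.ofReal (c * gtilde d g ξ)) =
      (volume.restrict (Set.Ioi 0)).withDensity fun t => ENNReal.ofReal (c * rho d a g t) := by
  have hψ := bijOn_psi hd ha
  conv_rhs => rw [← hψ.image_eq, ← map_restrict_withDensity_abs_deriv_mul measurableSet_Ioi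
    continuous_psi.measurable
    (fun ξ hξ => (hasDerivAt_psi hd ha hξ).differentiableAt.hasDerivAt.hasDerivWithinAt)
    hψ.injOn]
  refine congrArg _ (withDensity_congr_ae ((ae_restrict_mem measurableSet_Ioi).mono fun ξ hξ => ?_))
  have hψ' := deriv_psi_pos hd ha hξ
  dsimp only
  rw [abs_of_pos hψ', ← ENNReal.ofReal_mul hψ'.le, rho, za, Psi_psi hd ha (le_of_lt hξ)]
  congr 1
  field_simp

theorem pushforward_density_general (d : ℕ) (hd : 2 ≤ d) (a : ℝ) (ha : 0 < a)
    (g : ℝ → ℝ) (hgm : Measurable g)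
    (μv : Fin d → ℝ) (S : Matrix (Fin d) (Fin d) ℝ) (hS : S.PosDef)
    {Ω : Type*} [MeasurableSpace Ω] (P : Measure Ω)
    (X : Ω → (Fin d → ℝ))
    (hlaw : Measure.map X P =
      volume.withDensity (fun x => ENNReal.ofReal (ellDensity g μv S x))) :
    Measure.map (fun x => psi d a (quadForm μv S x)) (Measure.map X P) =
      (volume.restrict (Set.Ioi (0 : ℝ))).withDensity
        (fun t => ENNReal.ofReal
          ((π ^ ((d : ℝ) / 2) / Real.Gamma ((d : ℝ) / 2)) * rho d a g t)) := by
  have hd₀ : 0 < d := by omega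
  have hmapQ := map_quadForm_withDensity hd₀ μv hS
    (F := fun t => ENNReal.ofReal (|S.det| ^ (-(1 : ℝ) / 2) * g t))
    (measurable_const.mul hgm).ennreal_ofReal
  have hnorm : √S.det * |S.det| ^ (-(1 : ℝ) / 2) = 1 := by
    rw [abs_of_pos hS.det_pos, sqrt_eq_rpow, ← rpow_add hS.det_pos]
    norm_num
  rw [hlaw, ← Function.comp_def (psi d a),
    ← Measure.map_map continuous_psi.measurable (continuous_quadForm μv S).measurable]
  simp only [ellDensity]
  rw [hmapQ, ← map_psi_withDensity_gtilde hd₀ ha.le]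
  refine congrArg _ (withDensity_congr_ae ((ae_restrict_mem measurableSet_Ioi).mono
    fun t (ht : 0 < t) => ?_))
  have := pi_rpow_div_Gamma_nonneg d.cast_nonneg
  dsimp only
  rw [← ENNReal.ofReal_mul (by positivity), gtilde]
  congr 1
  linear_combination (π ^ ((d : ℝ) / 2) / Gamma ((d : ℝ) / 2) *
    (t ^ (((d : ℝ) - 2) / 2) * g t)) * hnorm

/-- the pushforward of the law of `X` under `x ↦ ψ_a((x-μ)ᵀΣ⁻¹(x-μ))` is the
measure on `(0,∞)` with Lebesgue density `s_d·ρ_a`. -/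
theorem pushforward_density (d : ℕ) (hd : 2 ≤ d) (a : ℝ) (ha : 0 < a)
    (g : ℝ → ℝ) (hgm : Measurable g) (hg0 : ∀ x, 0 ≤ g x)
    (μv : Fin d → ℝ) (S : Matrix (Fin d) (Fin d) ℝ) (hS : S.PosDef)
    {Ω : Type*} [MeasurableSpace Ω] (P : Measure Ω) [IsProbabilityMeasure P]
    (X : Ω → (Fin d → ℝ)) (hXm : Measurable X)
    (hlaw : Measure.map X P =
      volume.withDensity (fun x => ENNReal.ofReal (ellDensity g μv S x))) :
    Measure.map (fun x => psi d a (quadForm μv S x)) (Measure.map X P) =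
      (volume.restrict (Set.Ioi (0 : ℝ))).withDensity
        (fun t => ENNReal.ofReal
          ((π ^ ((d : ℝ) / 2) / Real.Gamma ((d : ℝ) / 2)) * rho d a g t)) :=
  pushforward_density_general d hd a ha g hgm μv S hS P X hlaw
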